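/- Suppose there exist b₁ > 1/2 and b₂ ∈ ℝ such that the trilinear convolution estimate ∫_{ξ₁+ξ₂=ξ, τ₁+τ₂=τ} ⟨ξ⟩^{s₁} f(τ₁,ξ₁) g(τ₂,ξ₂) h(τ,ξ) / (⟨ξ₁⟩^{s₁}⟨ξ₂⟩^{s₂}⟨τ₁+ξ₁²⟩^{b₁}⟨τ₂-ξ₂³⟩^{b₂}⟨τ+ξ²⟩^{1-b₁}) ≲ ‖f‖_{L²}‖g‖_{L²}‖h‖_{L²} holds for all nonnegative f,g,h ∈ L²(ℝ²). Then s₂ > s₁ - 5/2. Specifically, with f = χ_{[-2,2]²}(τ,ξ), g(τ,ξ) = χ_{[N,N+1]}(ξ)χ_{[0,1]}(τ-ξ³), h(τ,ξ) = χ_{[N³-10N²,N³+10N²]}(τ)χ_{[N-10,N+10]}(ξ), the left side is ≳ N^{-s₂+s₁-3+3b₁} while ‖f‖‖g‖‖h‖ ∼ N. -/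

import Mathlib

/-!
Test the estimate on indicators of boxes at frequency `N`, with `δ = N⁻²`:
`f` on `[0,1] × [0,δ]`, `g` on `[N³, N³+2] × [N, N+2δ]` (within `O(1)` of the cubic
surface `τ = ξ³`), `h` on `[N³+1, N³+2] × [N+δ, N+2δ]`. The supports are arranged so that
`f(τ₁,ξ₁) g(τ-τ₁,ξ-ξ₁) h(τ,ξ)` is exactly the indicator of a box of volume `δ²`, on which
`⟨ξ⟩, ⟨ξ-ξ₁⟩ ∼ N`, `⟨τ+ξ²⟩ ∼ N³` and the other brackets are `∼ 1`. The left side is then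
`≳ N^(s₁-s₂-3+3b₁) δ²`, while `‖f‖ ‖g‖ ‖h‖ = 2 N⁻³`, so `N^(s₁-s₂+3b₁-4)` stays bounded as
`N → ∞`. Hence `s₁ - s₂ + 3b₁ - 4 ≤ 0`, and `b₁ > 1/2` gives `s₂ > s₁ - 5/2`.
-/

open MeasureTheory Set
open scoped ENNReal

noncomputable section

def jap (x : ℝ) : ℝ := Real.sqrt (1 + x ^ 2)

lemma jap_pos (x : ℝ) : 0 < jap x := Real.sqrt_pos.2 (by positivity)

lemma one_le_jap (x : ℝ) : 1 ≤ jap x := Real.le_sqrt_of_sq_le (by nlinarith)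

lemma le_jap (x : ℝ) : x ≤ jap x := Real.le_sqrt_of_sq_le (by linarith)

lemma jap_le_of_abs_le {x B : ℝ} (h : |x| ≤ B) : jap x ≤ 1 + B :=
  Real.sqrt_le_iff.2 ⟨by linarith [abs_nonneg x], by nlinarith [abs_nonneg x, sq_abs x]⟩

lemma continuous_jap : Continuous jap := by unfold jap; fun_prop

lemma jap_rpow_pos (x s : ℝ) : 0 < jap x ^ s := Real.rpow_pos_of_pos (jap_pos x) s

@[fun_prop]
lemma Continuous.jap_rpow {α : Type*} [TopologicalSpace α] {f : α → ℝ} (hf : Continuous f)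
    (s : ℝ) : Continuous fun x => jap (f x) ^ s :=
  (continuous_jap.comp hf).rpow_const fun x => Or.inl (jap_pos (f x)).ne'

lemma rpow_le_of_one_le_of_le {t c : ℝ} (s : ℝ) (ht : 1 ≤ t) (htc : t ≤ c) :
    t ^ s ≤ c ^ |s| :=
  (Real.rpow_le_rpow_of_exponent_le ht (le_abs_self s)).trans
    (Real.rpow_le_rpow (by linarith) htc (abs_nonneg s))

lemma rpow_le_mul_rpow {x A c : ℝ} (s : ℝ) (hA : 0 < A) (hAx : A ≤ x) (hxc : x ≤ c * A) :
    x ^ s ≤ c ^ |s| * A ^ s := by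
  have hx₀ : 0 ≤ x := hA.le.trans hAx
  have hx : x = x / A * A := (div_mul_cancel₀ x hA.ne').symm
  rw [hx, Real.mul_rpow (by positivity) hA.le]
  gcongr
  exact rpow_le_of_one_le_of_le s ((one_le_div hA).2 hAx) ((div_le_iff₀ hA).2 hxc)

lemma inv_mul_rpow_le_rpow {x A c : ℝ} (s : ℝ) (hA : 0 < A) (hAx : A ≤ x) (hxc : x ≤ c * A) :
    (c ^ |s|)⁻¹ * A ^ s ≤ x ^ s := by
  have hx : 0 < x := hA.trans_le hAx
  have h := rpow_le_mul_rpow (-s) hA hAx hxc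
  rw [abs_neg, Real.rpow_neg hx.le, Real.rpow_neg hA.le] at h
  have hc : 0 < c ^ |s| := by
    have : 0 < c := pos_of_mul_pos_left (hA.trans_le (hAx.trans hxc)) hA.le
    positivity
  rw [inv_le_iff_one_le_mul₀' (by positivity)] at h
  rw [inv_mul_le_iff₀ hc]
  calc A ^ s = A ^ s * 1 := (mul_one _).symm
    _ ≤ A ^ s * (x ^ s * (c ^ |s| * (A ^ s)⁻¹)) := by gcongr
    _ = c ^ |s| * x ^ s := by field_simp

lemma integral_integral_integral_integral_eq {α β γ δ E : Type*} [MeasurableSpace α]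
    [MeasurableSpace β] [MeasurableSpace γ] [MeasurableSpace δ] [NormedAddCommGroup E]
    [NormedSpace ℝ E] {μα : Measure α} {μβ : Measure β} {μγ : Measure γ} {μδ : Measure δ}
    [SFinite μα] [SFinite μβ] [SFinite μγ] [SFinite μδ] (F : ((α × β) × γ) × δ → E)
    (hF : Integrable F (((μα.prod μβ).prod μγ).prod μδ)) :
    ∫ a, ∫ b, ∫ c, ∫ d, F (((a, b), c), d) ∂μδ ∂μγ ∂μβ ∂μα =
      ∫ q, F q ∂(((μα.prod μβ).prod μγ).prod μδ) := by
  rw [integral_prod F hF, integral_prod _ hF.integral_prod_left,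
    integral_prod _ hF.integral_prod_left.integral_prod_left]

lemma eLpNorm_indicator_Icc_prod_Icc {a b c d : ℝ} (hab : a ≤ b) (hcd : c ≤ d) :
    eLpNorm ((Icc a b ×ˢ Icc c d).indicator fun _ => (1 : ℝ)) 2 volume =
      ENNReal.ofReal √((b - a) * (d - c)) := by
  rw [eLpNorm_indicator_const (measurableSet_Icc.prod measurableSet_Icc) two_ne_zero
    ENNReal.ofNat_ne_top, Measure.volume_eq_prod, Measure.prod_prod, Real.volume_Icc,
    Real.volume_Icc, ← ENNReal.ofReal_mul (sub_nonneg.2 hab), Real.sqrt_eq_rpow,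
    ← ENNReal.ofReal_rpow_of_nonneg (mul_nonneg (sub_nonneg.2 hab) (sub_nonneg.2 hcd))
      (by norm_num)]
  simp

lemma nonpos_of_eventually_rpow_le {a M : ℝ} (h : ∀ᶠ N in Filter.atTop, N ^ a ≤ M) :
    a ≤ 0 := by
  by_contra! ha
  obtain ⟨N, hN, hMN⟩ := (h.and ((tendsto_rpow_atTop ha).eventually_gt_atTop M)).exists
  exact hMN.not_ge hN

def trilinearForm (s₁ s₂ b₁ b₂ : ℝ) (f g h : ℝ × ℝ → ℝ) : ℝ :=
  ∫ τ : ℝ, ∫ ξ : ℝ, ∫ τ₁ : ℝ, ∫ ξ₁ : ℝ,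
    jap ξ ^ s₁ * f (τ₁, ξ₁) * g (τ - τ₁, ξ - ξ₁) * h (τ, ξ) /
      (jap ξ₁ ^ s₁ * jap (ξ - ξ₁) ^ s₂ * jap (τ₁ + ξ₁ ^ 2) ^ b₁ *
        jap ((τ - τ₁) - (ξ - ξ₁) ^ 3) ^ b₂ * jap (τ + ξ ^ 2) ^ (1 - b₁))

def multiplier (s₁ s₂ b₁ b₂ : ℝ) (q : ((ℝ × ℝ) × ℝ) × ℝ) : ℝ :=
  let τ := q.1.1.1; let ξ := q.1.1.2; let τ₁ := q.1.2; let ξ₁ := q.2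
  jap ξ ^ s₁ /
    (jap ξ₁ ^ s₁ * jap (ξ - ξ₁) ^ s₂ * jap (τ₁ + ξ₁ ^ 2) ^ b₁ *
      jap ((τ - τ₁) - (ξ - ξ₁) ^ 3) ^ b₂ * jap (τ + ξ ^ 2) ^ (1 - b₁))

lemma continuous_multiplier (s₁ s₂ b₁ b₂ : ℝ) : Continuous (multiplier s₁ s₂ b₁ b₂) :=
  Continuous.div (by fun_prop) (by fun_prop) fun q =>
    ne_of_gt (by apply_rules [mul_pos, jap_rpow_pos])

def testF (N : ℝ) : ℝ × ℝ → ℝ :=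
  (Icc 0 1 ×ˢ Icc 0 (N ^ 2)⁻¹).indicator fun _ => 1

def testG (N : ℝ) : ℝ × ℝ → ℝ :=
  (Icc (N ^ 3) (N ^ 3 + 2) ×ˢ Icc N (N + 2 * (N ^ 2)⁻¹)).indicator fun _ => 1

def testH (N : ℝ) : ℝ × ℝ → ℝ :=
  (Icc (N ^ 3 + 1) (N ^ 3 + 2) ×ˢ Icc (N + (N ^ 2)⁻¹) (N + 2 * (N ^ 2)⁻¹)).indicator fun _ => 1

def testSupport (N : ℝ) : Set (((ℝ × ℝ) × ℝ) × ℝ) :=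
  ((Icc (N ^ 3 + 1) (N ^ 3 + 2) ×ˢ Icc (N + (N ^ 2)⁻¹) (N + 2 * (N ^ 2)⁻¹)) ×ˢ Icc 0 1) ×ˢ
    Icc 0 (N ^ 2)⁻¹

lemma isCompact_testSupport (N : ℝ) : IsCompact (testSupport N) :=
  ((isCompact_Icc.prod isCompact_Icc).prod isCompact_Icc).prod isCompact_Icc

lemma testF_mul_testG_mul_testH (N τ ξ τ₁ ξ₁ : ℝ) :
    testF N (τ₁, ξ₁) * testG N (τ - τ₁, ξ - ξ₁) * testH N (τ, ξ) =
      (testSupport N).indicator 1 (((τ, ξ), τ₁), ξ₁) := by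
  by_cases hq : (((τ, ξ), τ₁), ξ₁) ∈ testSupport N
  · rw [indicator_of_mem hq]
    simp only [testSupport, mem_prod, mem_Icc] at hq
    rw [testF, testG, testH, indicator_of_mem, indicator_of_mem, indicator_of_mem] <;>
      simp only [mem_prod, mem_Icc, Pi.one_apply] <;> grind
  · rw [indicator_of_notMem hq]
    have : (τ, ξ) ∉ Icc (N ^ 3 + 1) (N ^ 3 + 2) ×ˢ Icc (N + (N ^ 2)⁻¹) (N + 2 * (N ^ 2)⁻¹) ∨
        (τ₁, ξ₁) ∉ Icc 0 1 ×ˢ Icc 0 (N ^ 2)⁻¹ := by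
      simp only [testSupport, mem_prod] at hq ⊢
      tauto
    rcases this with hH | hF
    · rw [testH, indicator_of_notMem hH, mul_zero]
    · rw [testF, indicator_of_notMem hF, zero_mul, zero_mul]

lemma trilinearForm_test_eq_integral_indicator (s₁ s₂ b₁ b₂ N : ℝ) :
    trilinearForm s₁ s₂ b₁ b₂ (testF N) (testG N) (testH N) =
      ∫ q, (testSupport N).indicator (multiplier s₁ s₂ b₁ b₂) q := by
  have hcomp := isCompact_testSupport N
  have hint : Integrable ((testSupport N).indicator (multiplier s₁ s₂ b₁ b₂)) :=
    (integrable_indicator_iff hcomp.measurableSet).2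
      ((continuous_multiplier s₁ s₂ b₁ b₂).continuousOn.integrableOn_compact hcomp)
  rw [Measure.volume_eq_prod, Measure.volume_eq_prod, Measure.volume_eq_prod] at hint ⊢
  rw [← integral_integral_integral_integral_eq _ hint]
  unfold trilinearForm
  congr! 8 with τ ξ τ₁ ξ₁
  rw [mul_assoc, mul_assoc, ← mul_assoc (testF N _), mul_div_right_comm,
    testF_mul_testG_mul_testH]
  by_cases hq : (((τ, ξ), τ₁), ξ₁) ∈ testSupport N
  · simp [indicator_of_mem hq, multiplier]
  · simp [indicator_of_notMem hq]

lemma volume_testSupport (N : ℝ) : volume (testSupport N) = ENNReal.ofReal (((N ^ 2)⁻¹) ^ 2) := by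
  simp only [testSupport, Measure.volume_eq_prod, Measure.prod_prod, Real.volume_Icc]
  rw [show N ^ 3 + 2 - (N ^ 3 + 1) = 1 by ring,
    show N + 2 * (N ^ 2)⁻¹ - (N + (N ^ 2)⁻¹) = (N ^ 2)⁻¹ by ring, sub_zero, sub_zero,
    ENNReal.ofReal_one, one_mul, mul_one, ← ENNReal.ofReal_mul (by positivity), ← sq]

lemma mul_le_trilinearForm_test {c s₁ s₂ b₁ b₂ N : ℝ}
    (hc : ∀ q ∈ testSupport N, c ≤ multiplier s₁ s₂ b₁ b₂ q) :
    c * ((N ^ 2)⁻¹) ^ 2 ≤ trilinearForm s₁ s₂ b₁ b₂ (testF N) (testG N) (testH N) := by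
  have hcomp := isCompact_testSupport N
  have hvol : volume.real (testSupport N) = ((N ^ 2)⁻¹) ^ 2 := by
    rw [measureReal_def, volume_testSupport, ENNReal.toReal_ofReal (by positivity)]
  rw [trilinearForm_test_eq_integral_indicator, integral_indicator hcomp.measurableSet, ← hvol]
  exact setIntegral_ge_of_const_le_real hcomp.measurableSet hcomp.measure_lt_top.ne hc
    ((continuous_multiplier s₁ s₂ b₁ b₂).continuousOn.integrableOn_compact hcomp)

lemma abs_sub_cube_le_seven {N τ ξ : ℝ} (hN : 5 ≤ N) (hτ : N ^ 3 ≤ τ) (hτ' : τ ≤ N ^ 3 + 2)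
    (hξ : N ≤ ξ) (hξ' : ξ ≤ N + 2 * (N ^ 2)⁻¹) : |τ - ξ ^ 3| ≤ 7 := by
  set δ := (N ^ 2)⁻¹
  have hNδ : N ^ 2 * δ = 1 := mul_inv_cancel₀ (by positivity)
  have hδ : δ ≤ 25⁻¹ := inv_anti₀ (by norm_num) (by nlinarith)
  have hlow : N ^ 3 ≤ ξ ^ 3 := by gcongr
  have hup : ξ ^ 3 ≤ N ^ 3 + 7 :=
    calc ξ ^ 3 ≤ (N + 2 * δ) ^ 3 := by gcongr; linarith
      _ = N ^ 3 + 6 * (N ^ 2 * δ) + 12 * N * δ ^ 2 + 8 * δ ^ 3 := by ring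
      _ ≤ N ^ 3 + 7 := by rw [hNδ]; nlinarith [inv_nonneg.2 (sq_nonneg N)]
  exact abs_le.2 ⟨by linarith, by linarith⟩

lemma multiplier_ge {s₁ s₂ b₁ b₂ N : ℝ} {q : ((ℝ × ℝ) × ℝ) × ℝ} (hN : 5 ≤ N)
    (hq : q ∈ testSupport N) :
    (8 ^ |s₁|)⁻¹ * N ^ s₁ / (8 ^ |s₁| * (8 ^ |s₂| * N ^ s₂) * 8 ^ |b₁| * 8 ^ |b₂| *
      (8 ^ |1 - b₁| * (N ^ 3) ^ (1 - b₁))) ≤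
      multiplier s₁ s₂ b₁ b₂ q := by
  obtain ⟨⟨⟨⟨hτ, hτ'⟩, hξ, hξ'⟩, hτ₁, hτ₁'⟩, hξ₁, hξ₁'⟩ := hq
  set τ := q.1.1.1
  set ξ := q.1.1.2
  set τ₁ := q.1.2
  set ξ₁ := q.2
  have hN0 : 0 < N := by linarith
  have hδ : (N ^ 2)⁻¹ ≤ 1 / 2 := by rw [one_div]; exact inv_anti₀ (by norm_num) (by nlinarith)
  have bξ : (8 ^ |s₁|)⁻¹ * N ^ s₁ ≤ jap ξ ^ s₁ :=
    inv_mul_rpow_le_rpow s₁ hN0 (by linarith [le_jap ξ])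
      (by linarith [jap_le_of_abs_le (abs_le.2 ⟨by linarith, (by linarith : ξ ≤ N + 1)⟩)])
  have bξ₁ : jap ξ₁ ^ s₁ ≤ 8 ^ |s₁| :=
    rpow_le_of_one_le_of_le s₁ (one_le_jap _)
      (by linarith [jap_le_of_abs_le (abs_le.2 ⟨by linarith, (by linarith : ξ₁ ≤ 1)⟩)])
  have bξ₂ : jap (ξ - ξ₁) ^ s₂ ≤ 8 ^ |s₂| * N ^ s₂ :=
    rpow_le_mul_rpow s₂ hN0 (by linarith [le_jap (ξ - ξ₁)])
      (by linarith [jap_le_of_abs_le (abs_le.2 ⟨by linarith, (by linarith : ξ - ξ₁ ≤ N + 1)⟩)])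
  have bσ₁ : jap (τ₁ + ξ₁ ^ 2) ^ b₁ ≤ 8 ^ |b₁| :=
    rpow_le_of_one_le_of_le b₁ (one_le_jap _)
      (by nlinarith [jap_le_of_abs_le (abs_le.2 ⟨by nlinarith, (by nlinarith : τ₁ + ξ₁ ^ 2 ≤ 2)⟩)])
  have bσ₂ : jap ((τ - τ₁) - (ξ - ξ₁) ^ 3) ^ b₂ ≤ 8 ^ |b₂| :=
    rpow_le_of_one_le_of_le b₂ (one_le_jap _) <| by
      linarith [jap_le_of_abs_le (abs_sub_cube_le_seven (τ := τ - τ₁) (ξ := ξ - ξ₁) hN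
        (by linarith) (by linarith) (by linarith) (by linarith))]
  have bσ : jap (τ + ξ ^ 2) ^ (1 - b₁) ≤ 8 ^ |1 - b₁| * (N ^ 3) ^ (1 - b₁) := by
    have hξsq : ξ ^ 2 ≤ (N + 1) ^ 2 := by gcongr <;> linarith
    have hN3 : (N + 1) ^ 2 + 3 ≤ 7 * N ^ 3 := by nlinarith
    exact rpow_le_mul_rpow (1 - b₁) (by positivity) (by nlinarith [le_jap (τ + ξ ^ 2)])
      (by linarith [jap_le_of_abs_le (abs_le.2 ⟨by nlinarith,
        (by nlinarith : τ + ξ ^ 2 ≤ N ^ 3 + 2 + (N + 1) ^ 2)⟩)])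
  refine div_le_div₀ (jap_rpow_pos _ _).le bξ (by apply_rules [mul_pos, jap_rpow_pos]) ?_
  gcongr
  all_goals exact (jap_rpow_pos _ _).le

lemma exists_pos_mul_rpow_le_multiplier (s₁ s₂ b₁ b₂ : ℝ) :
    ∃ κ > 0, ∀ N ≥ 5, ∀ q ∈ testSupport N,
      κ * N ^ (s₁ - s₂ - 3 + 3 * b₁) ≤ multiplier s₁ s₂ b₁ b₂ q := by
  refine ⟨(8 ^ |s₁|)⁻¹ / (8 ^ |s₁| * 8 ^ |s₂| * 8 ^ |b₁| * 8 ^ |b₂| * 8 ^ |1 - b₁|),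
    by positivity, fun N hN q hq => le_of_eq_of_le ?_ (multiplier_ge hN hq)⟩
  have hN0 : 0 < N := by linarith
  have hpow : N ^ (s₁ - s₂ - 3 + 3 * b₁) * (N ^ s₂ * (N ^ 3) ^ (1 - b₁)) = N ^ s₁ := by
    rw [← Real.rpow_natCast_mul hN0.le, ← Real.rpow_add hN0, ← Real.rpow_add hN0]
    ring_nf
  have : 0 < N ^ s₂ := Real.rpow_pos_of_pos hN0 _
  have : 0 < (N ^ 3) ^ (1 - b₁) := Real.rpow_pos_of_pos (by positivity) _
  rw [← hpow]
  field_simp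

lemma eLpNorm_testF_mul_eLpNorm_testG_mul_eLpNorm_testH {N : ℝ} (hN : 0 < N) :
    eLpNorm (testF N) 2 volume * eLpNorm (testG N) 2 volume * eLpNorm (testH N) 2 volume =
      ENNReal.ofReal (2 / N ^ 3) := by
  have hδ : 0 ≤ (N ^ 2)⁻¹ := by positivity
  rw [testF, testG, testH, eLpNorm_indicator_Icc_prod_Icc zero_le_one hδ,
    eLpNorm_indicator_Icc_prod_Icc (by linarith) (by linarith),
    eLpNorm_indicator_Icc_prod_Icc (by linarith) (by linarith),
    ← ENNReal.ofReal_mul (Real.sqrt_nonneg _), ← ENNReal.ofReal_mul (by positivity)]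
  have hF : (1 - 0) * ((N ^ 2)⁻¹ - 0) = N⁻¹ ^ 2 := by ring
  have hG : (N ^ 3 + 2 - N ^ 3) * (N + 2 * (N ^ 2)⁻¹ - N) = (2 * N⁻¹) ^ 2 := by ring
  have hH : (N ^ 3 + 2 - (N ^ 3 + 1)) * (N + 2 * (N ^ 2)⁻¹ - (N + (N ^ 2)⁻¹)) = N⁻¹ ^ 2 := by
    ring
  rw [hF, hG, hH, Real.sqrt_sq (by positivity), Real.sqrt_sq (by positivity)]
  congr 1
  field_simp

lemma rpow_le_of_trilinearForm_test_le {s₁ s₂ b₁ b₂ C κ N : ℝ} (hC : 0 ≤ C) (hκ : 0 < κ)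
    (hN : 5 ≤ N)
    (hlow : ∀ q ∈ testSupport N, κ * N ^ (s₁ - s₂ - 3 + 3 * b₁) ≤ multiplier s₁ s₂ b₁ b₂ q)
    (hest : ENNReal.ofReal (trilinearForm s₁ s₂ b₁ b₂ (testF N) (testG N) (testH N)) ≤
      ENNReal.ofReal C * eLpNorm (testF N) 2 volume * eLpNorm (testG N) 2 volume *
        eLpNorm (testH N) 2 volume) :
    N ^ (s₁ - s₂ + 3 * b₁ - 4) ≤ 2 * C / κ := by
  have hN0 : 0 < N := by linarith
  rw [mul_assoc, mul_assoc, ← mul_assoc (eLpNorm _ _ _),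
    eLpNorm_testF_mul_eLpNorm_testG_mul_eLpNorm_testH hN0, ← ENNReal.ofReal_mul hC,
    ENNReal.ofReal_le_ofReal_iff (by positivity)] at hest
  have hbound := (mul_le_trilinearForm_test hlow).trans hest
  rw [show s₁ - s₂ + 3 * b₁ - 4 = (s₁ - s₂ - 3 + 3 * b₁) - 1 by ring,
    Real.rpow_sub_one hN0.ne', le_div_iff₀ hκ]
  calc N ^ (s₁ - s₂ - 3 + 3 * b₁) / N * κ
      = κ * N ^ (s₁ - s₂ - 3 + 3 * b₁) * ((N ^ 2)⁻¹) ^ 2 * N ^ 3 := by field_simp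
    _ ≤ C * (2 / N ^ 3) * N ^ 3 := by gcongr
    _ = 2 * C := by field_simp

/-- Necessity in Bourgain-space duality form: if there are `b₁ > 1/2` and `b₂` such that
the trilinear convolution estimate holds for all nonnegative `f, g, h ∈ L²(ℝ²)`,
then `s₂ > s₁ - 5/2`. -/
theorem bourgain_trilinear_necessity (s₁ s₂ b₁ b₂ : ℝ) (hb₁ : 1/2 < b₁)
    (h : ∃ C : ℝ, 0 < C ∧ ∀ f g h' : ℝ × ℝ → ℝ,
      (∀ p, 0 ≤ f p) → (∀ p, 0 ≤ g p) → (∀ p, 0 ≤ h' p) →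
      ENNReal.ofReal (∫ τ : ℝ, ∫ ξ : ℝ, ∫ τ₁ : ℝ, ∫ ξ₁ : ℝ,
        jap ξ ^ s₁ * f (τ₁, ξ₁) * g (τ - τ₁, ξ - ξ₁) * h' (τ, ξ) /
          (jap ξ₁ ^ s₁ * jap (ξ - ξ₁) ^ s₂ * jap (τ₁ + ξ₁ ^ 2) ^ b₁ *
            jap ((τ - τ₁) - (ξ - ξ₁) ^ 3) ^ b₂ * jap (τ + ξ ^ 2) ^ (1 - b₁))) ≤
        ENNReal.ofReal C * eLpNorm f 2 volume * eLpNorm g 2 volume *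
          eLpNorm h' 2 volume) :
    s₁ - 5/2 < s₂ := by
  obtain ⟨C, hC, hest⟩ := h
  obtain ⟨κ, hκ, hlow⟩ := exists_pos_mul_rpow_le_multiplier s₁ s₂ b₁ b₂
  have hbounded : ∀ᶠ N in Filter.atTop, N ^ (s₁ - s₂ + 3 * b₁ - 4) ≤ 2 * C / κ :=
    (Filter.eventually_ge_atTop 5).mono fun N hN =>
      rpow_le_of_trilinearForm_test_le hC.le hκ hN (hlow N hN)
        (hest _ _ _ (indicator_nonneg fun _ _ => zero_le_one)
          (indicator_nonneg fun _ _ => zero_le_one) (indicator_nonneg fun _ _ => zero_le_one))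
  linarith [nonpos_of_eventually_rpow_le hbounded]
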